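/- Let G be a finite simple graph with vertex set V. For every vertex v: the sum over all vertices u ∈ V \ (Γ(v) ∪ {v}) of binomial( |Γ(v) ∩ Γ(u)|, 2 ) equals F7(v) + F9(v). -/

import Mathlib

open Finset
open scoped Classical

namespace FourProfiles

variable {V : Type*} [Fintype V] [DecidableEq V]

/-- Number of 3-element subsets of `V \ {v}` admitting a labeling `a, b, c` satisfying `P`. -/
noncomputable def cnt3 (v : V) (P : V → V → V → Prop) : ℕ :=
  (((Finset.univ : Finset V).powersetCard 3).filter
    (fun s => v ∉ s ∧ ∃ a ∈ s, ∃ b ∈ s, ∃ c ∈ s, s = {a, b, c} ∧ P a b c)).card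

variable (G : SimpleGraph V)

/-- Induced subgraph on `{v,a,b,c}` has exactly one edge, with `v` an endpoint. -/
noncomputable def F1 (v : V) : ℕ := cnt3 v fun a b c =>
  G.Adj v a ∧ ¬G.Adj v b ∧ ¬G.Adj v c ∧ ¬G.Adj a b ∧ ¬G.Adj a c ∧ ¬G.Adj b c

/-- Induced subgraph on `{v,a,b,c}` is a perfect matching (two disjoint edges). -/
noncomputable def F2 (v : V) : ℕ := cnt3 v fun a b c =>
  G.Adj v a ∧ G.Adj b c ∧ ¬G.Adj v b ∧ ¬G.Adj v c ∧ ¬G.Adj a b ∧ ¬G.Adj a c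

/-- Two-edge path plus isolated vertex, `v` an endpoint of the path. -/
noncomputable def F3 (v : V) : ℕ := cnt3 v fun a b c =>
  G.Adj v a ∧ G.Adj a b ∧ ¬G.Adj v b ∧ ¬G.Adj v c ∧ ¬G.Adj a c ∧ ¬G.Adj b c

/-- Two-edge path plus isolated vertex, `v` the middle vertex of the path. -/
noncomputable def F3' (v : V) : ℕ := cnt3 v fun a b c =>
  G.Adj v a ∧ G.Adj v b ∧ ¬G.Adj a b ∧ ¬G.Adj v c ∧ ¬G.Adj a c ∧ ¬G.Adj b c

/-- Path on four vertices, `v` an endpoint. -/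
noncomputable def F4 (v : V) : ℕ := cnt3 v fun a b c =>
  G.Adj v a ∧ G.Adj a b ∧ G.Adj b c ∧ ¬G.Adj v b ∧ ¬G.Adj v c ∧ ¬G.Adj a c

/-- Path on four vertices, `v` an internal (degree-2) vertex. -/
noncomputable def F4' (v : V) : ℕ := cnt3 v fun a b c =>
  G.Adj v a ∧ G.Adj v b ∧ G.Adj b c ∧ ¬G.Adj a b ∧ ¬G.Adj v c ∧ ¬G.Adj a c

/-- Triangle plus isolated vertex, `v` in the triangle. -/
noncomputable def F5 (v : V) : ℕ := cnt3 v fun a b c =>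
  G.Adj v a ∧ G.Adj v b ∧ G.Adj a b ∧ ¬G.Adj v c ∧ ¬G.Adj a c ∧ ¬G.Adj b c

/-- Star `K_{1,3}`, `v` a leaf. -/
noncomputable def F6 (v : V) : ℕ := cnt3 v fun a b c =>
  G.Adj v a ∧ G.Adj a b ∧ G.Adj a c ∧ ¬G.Adj v b ∧ ¬G.Adj v c ∧ ¬G.Adj b c

/-- Star `K_{1,3}`, `v` the center. -/
noncomputable def F6' (v : V) : ℕ := cnt3 v fun a b c =>
  G.Adj v a ∧ G.Adj v b ∧ G.Adj v c ∧ ¬G.Adj a b ∧ ¬G.Adj a c ∧ ¬G.Adj b c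

/-- 4-cycle. -/
noncomputable def F7 (v : V) : ℕ := cnt3 v fun a b c =>
  G.Adj v a ∧ G.Adj a b ∧ G.Adj b c ∧ G.Adj v c ∧ ¬G.Adj v b ∧ ¬G.Adj a c

/-- Paw (triangle with a pendant edge), `v` the pendant (degree-1) vertex. -/
noncomputable def F8 (v : V) : ℕ := cnt3 v fun a b c =>
  G.Adj v a ∧ G.Adj a b ∧ G.Adj a c ∧ G.Adj b c ∧ ¬G.Adj v b ∧ ¬G.Adj v c

/-- Paw, `v` the degree-3 vertex. -/
noncomputable def F8' (v : V) : ℕ := cnt3 v fun a b c =>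
  G.Adj v a ∧ G.Adj v b ∧ G.Adj a b ∧ G.Adj v c ∧ ¬G.Adj a c ∧ ¬G.Adj b c

/-- Paw, `v` one of the two degree-2 vertices. -/
noncomputable def F8'' (v : V) : ℕ := cnt3 v fun a b c =>
  G.Adj v a ∧ G.Adj v b ∧ G.Adj a b ∧ G.Adj a c ∧ ¬G.Adj v c ∧ ¬G.Adj b c

/-- Diamond (`K4` minus one edge), `v` one of the two degree-2 vertices. -/
noncomputable def F9 (v : V) : ℕ := cnt3 v fun a b c =>
  G.Adj v a ∧ G.Adj v b ∧ G.Adj a b ∧ G.Adj a c ∧ G.Adj b c ∧ ¬G.Adj v c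

/-- Diamond, `v` one of the two degree-3 vertices. -/
noncomputable def F9' (v : V) : ℕ := cnt3 v fun a b c =>
  G.Adj v a ∧ G.Adj v b ∧ G.Adj v c ∧ G.Adj a b ∧ G.Adj a c ∧ ¬G.Adj b c

/-- Complete graph `K4`. -/
noncomputable def F10 (v : V) : ℕ := cnt3 v fun a b c =>
  G.Adj v a ∧ G.Adj v b ∧ G.Adj v c ∧ G.Adj a b ∧ G.Adj a c ∧ G.Adj b c

/-- `|V \ (Γ(v) ∪ Γ(a))|`. -/
noncomputable def n1e (v a : V) : ℕ :=
  (Finset.univ.filter fun x => ¬G.Adj v x ∧ ¬G.Adj a x).card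

/-- `|Γ(v) \ (Γ(a) ∪ {a})|`. -/
noncomputable def n2c (v a : V) : ℕ :=
  (Finset.univ.filter fun x => G.Adj v x ∧ ¬G.Adj a x ∧ x ≠ a).card

/-- `|Γ(a) \ (Γ(v) ∪ {v})|`. -/
noncomputable def n2e (v a : V) : ℕ :=
  (Finset.univ.filter fun x => G.Adj a x ∧ ¬G.Adj v x ∧ x ≠ v).card

/-- `|Γ(v) ∩ Γ(a)|`. -/
noncomputable def n3 (v a : V) : ℕ :=
  (Finset.univ.filter fun x => G.Adj v x ∧ G.Adj a x).card

/-- Number of edges of `G` with neither endpoint in `Γ(v) ∪ {v}`. -/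
noncomputable def n1d (v : V) : ℕ :=
  (((Finset.univ : Finset V).powersetCard 2).filter
    (fun s => ∃ a ∈ s, ∃ b ∈ s, s = {a, b} ∧ G.Adj a b ∧
      ¬G.Adj v a ∧ ¬G.Adj v b ∧ a ≠ v ∧ b ≠ v)).card

/-- Number of triangles of `G` containing `a`. -/
noncomputable def tri (a : V) : ℕ :=
  (((Finset.univ : Finset V).powersetCard 2).filter
    (fun s => ∃ x ∈ s, ∃ y ∈ s, s = {x, y} ∧ G.Adj a x ∧ G.Adj a y ∧ G.Adj x y)).card

/-- Number of 2-element subsets `{x,y}` of `V \ {a}` inducing a two-edge path with `a`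
an endpoint. -/
noncomputable def twoPathEnd (a : V) : ℕ :=
  (((Finset.univ : Finset V).powersetCard 2).filter
    (fun s => a ∉ s ∧ ∃ x ∈ s, ∃ y ∈ s, s = {x, y} ∧ G.Adj a x ∧ G.Adj x y ∧ ¬G.Adj a y)).card

/-- Number of 2-element subsets `{b,c} ⊆ Γ(a)` with `b` adjacent to `c`, `b ∈ Γ(v)`,
`c ∈ Γ(v)`. -/
noncomputable def triIn (v a : V) : ℕ :=
  (((Finset.univ : Finset V).powersetCard 2).filter
    (fun s => ∃ b ∈ s, ∃ c ∈ s, s = {b, c} ∧ G.Adj a b ∧ G.Adj a c ∧ G.Adj b c ∧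
      G.Adj v b ∧ G.Adj v c)).card

/-- Number of 2-element subsets `{b,c} ⊆ Γ(a)` with `b` adjacent to `c`, `b ∉ Γ(v)`,
`c ∉ Γ(v)`. -/
noncomputable def triOut (v a : V) : ℕ :=
  (((Finset.univ : Finset V).powersetCard 2).filter
    (fun s => ∃ b ∈ s, ∃ c ∈ s, s = {b, c} ∧ G.Adj a b ∧ G.Adj a c ∧ G.Adj b c ∧
      ¬G.Adj v b ∧ ¬G.Adj v c)).card

end FourProfiles

/-!
Both sides count pairs `(u, {b, c})` with `u ∉ Γ(v) ∪ {v}` and `b ≠ c` in `Γ(v) ∩ Γ(u)`: the map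
`(u, {b, c}) ↦ {u, b, c}` is a bijection onto the 3-sets that induce with `v` a 4-cycle (when
`b ≁ c`) or a diamond with `v` of degree 2 (when `b ∼ c`), since `u` is recovered as the only
vertex of `{u, b, c}` not adjacent to `v`.
-/

theorem Finset.eq_and_eq_of_insert_eq_insert {α : Type*} [DecidableEq α] {A : α → Prop}
    {u u' : α} {p p' : Finset α} (hu : ¬A u) (hu' : ¬A u') (hp : ∀ x ∈ p, A x)
    (hp' : ∀ x ∈ p', A x) (h : insert u p = insert u' p') : u = u' ∧ p = p' := by
  have huu' : u = u' := by
    have : u ∈ insert u' p' := h ▸ Finset.mem_insert_self u p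
    exact (Finset.mem_insert.mp this).resolve_right fun hup' => hu (hp' u hup')
  subst huu'
  refine ⟨rfl, ?_⟩
  rw [← Finset.erase_insert (fun h => hu (hp u h)), ← Finset.erase_insert (fun h => hu (hp' u h)),
    h]

theorem Finset.ne_of_card_triple_eq_three {α : Type*} [DecidableEq α] {a b c : α}
    (h : ({a, b, c} : Finset α).card = 3) : a ≠ b ∧ a ≠ c ∧ b ≠ c := by
  have ha : a ∉ ({b, c} : Finset α) := fun ha => by
    have := Finset.card_le_two (a := b) (b := c)
    rw [Finset.insert_eq_of_mem ha] at h
    omega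
  have hbc : b ≠ c := by
    rintro rfl
    have := Finset.card_le_two (a := a) (b := b)
    rw [Finset.pair_eq_singleton] at h
    omega
  simp only [Finset.mem_insert, Finset.mem_singleton, not_or] at ha
  exact ⟨ha.1, ha.2, hbc⟩

namespace FourProfiles

section

variable {V : Type*} [Fintype V] (G : SimpleGraph V)

noncomputable def commonNeighborPairs (v u : V) : Finset (Finset V) :=
  (Finset.univ.filter fun x => G.Adj v x ∧ G.Adj u x).powersetCard 2

lemma mem_commonNeighborPairs {v u : V} {p : Finset V} :
    p ∈ commonNeighborPairs G v u ↔ (∀ x ∈ p, G.Adj v x ∧ G.Adj u x) ∧ p.card = 2 := by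
  simp only [commonNeighborPairs, Finset.mem_powersetCard, Finset.subset_iff, Finset.mem_filter,
    Finset.mem_univ, true_and]

lemma sum_choose_n3_eq_card_sigma (S : Finset V) (v : V) :
    ∑ u ∈ S, (n3 G v u).choose 2 = (S.sigma (commonNeighborPairs G v)).card := by
  simp only [Finset.card_sigma, commonNeighborPairs, Finset.card_powersetCard, n3]

end

variable {V : Type*} [Fintype V] [DecidableEq V]

lemma cnt3_swap (v : V) (P : V → V → V → Prop) :
    cnt3 v (fun a b c => P a c b) = cnt3 v P := by
  unfold cnt3
  congr 1
  refine Finset.filter_congr fun s _ => and_congr_right fun _ => ?_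
  constructor
  · rintro ⟨a, ha, b, hb, c, hc, rfl, hP⟩
    exact ⟨a, ha, c, hc, b, hb, by rw [Finset.pair_comm], hP⟩
  · rintro ⟨a, ha, b, hb, c, hc, rfl, hP⟩
    exact ⟨a, ha, c, hc, b, hb, by rw [Finset.pair_comm], hP⟩

variable (G : SimpleGraph V)

lemma mem_sdiff_neighborFinset_union_singleton [DecidableRel G.Adj] {v u : V} :
    u ∈ Finset.univ \ (G.neighborFinset v ∪ {v}) ↔ ¬G.Adj v u ∧ u ≠ v := by
  simp only [Finset.mem_sdiff, Finset.mem_univ, Finset.mem_union, SimpleGraph.mem_neighborFinset,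
    Finset.mem_singleton, true_and, not_or]

lemma card_filter_sigma_commonNeighborPairs [DecidableRel G.Adj] (v : V) (Q : Finset V → Prop)
    [DecidablePred Q] :
    (((Finset.univ \ (G.neighborFinset v ∪ {v})).sigma (commonNeighborPairs G v)).filter
        fun q => Q q.2).card =
      cnt3 v fun a b u => G.Adj v a ∧ G.Adj v b ∧ G.Adj u a ∧ G.Adj u b ∧ ¬G.Adj v u ∧ Q {a, b} := by
  unfold cnt3
  apply Finset.card_bij (fun q _ => insert q.1 q.2)
  · rintro ⟨u, p⟩ hq
    simp only [Finset.mem_filter, Finset.mem_sigma, mem_sdiff_neighborFinset_union_singleton, mem_commonNeighborPairs] at hq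
    obtain ⟨⟨⟨hvu, huv⟩, hp, hcard⟩, hQ⟩ := hq
    obtain ⟨b, c, hbc, rfl⟩ := Finset.card_eq_two.mp hcard
    obtain ⟨hvb, hub⟩ := hp b (by simp)
    obtain ⟨hvc, huc⟩ := hp c (by simp)
    have hu : u ∉ ({b, c} : Finset V) := fun h => hvu (hp u h).1
    simp only [Finset.mem_filter, Finset.mem_powersetCard, Finset.subset_univ, true_and]
    refine ⟨by rw [Finset.card_insert_of_notMem hu, Finset.card_pair hbc], ?_,
      b, by simp, c, by simp, u, by simp, ?_, hvb, hvc, hub, huc, hvu, hQ⟩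
    · simp only [Finset.mem_insert, Finset.mem_singleton, not_or]
      exact ⟨Ne.symm huv, G.ne_of_adj hvb, G.ne_of_adj hvc⟩
    · ext x
      simp only [Finset.mem_insert, Finset.mem_singleton]
      tauto
  · rintro ⟨u, p⟩ hq ⟨u', p'⟩ hq' h
    simp only [Finset.mem_filter, Finset.mem_sigma, mem_sdiff_neighborFinset_union_singleton, mem_commonNeighborPairs] at hq hq'
    obtain ⟨rfl, rfl⟩ := Finset.eq_and_eq_of_insert_eq_insert (A := G.Adj v) hq.1.1.1 hq'.1.1.1
      (fun x hx => (hq.1.2.1 x hx).1) (fun x hx => (hq'.1.2.1 x hx).1) h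
    rfl
  · intro s hs
    simp only [Finset.mem_filter, Finset.mem_powersetCard] at hs
    obtain ⟨⟨-, hcard⟩, hvs, a, -, b, -, u, hu, rfl, hva, hvb, hua, hub, hvu, hQ⟩ := hs
    have hab : a ≠ b := (Finset.ne_of_card_triple_eq_three hcard).1
    refine ⟨⟨u, {a, b}⟩, ?_, ?_⟩
    · simp only [Finset.mem_filter, Finset.mem_sigma, mem_sdiff_neighborFinset_union_singleton, mem_commonNeighborPairs,
        Finset.mem_insert, Finset.mem_singleton, forall_eq_or_imp, forall_eq]
      exact ⟨⟨⟨hvu, fun h => hvs (h ▸ hu)⟩, ⟨⟨hva, hua⟩, hvb, hub⟩, Finset.card_pair hab⟩, hQ⟩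
    · ext x
      simp only [Finset.mem_insert, Finset.mem_singleton]
      tauto

theorem statement18 [DecidableRel G.Adj] (v : V) :
    ∑ u ∈ Finset.univ \ (G.neighborFinset v ∪ {v}), Nat.choose (n3 G v u) 2 =
      F7 G v + F9 G v := by
  have pair_has_edge_iff (a b : V) :
      (∃ x ∈ ({a, b} : Finset V), ∃ y ∈ ({a, b} : Finset V), G.Adj x y) ↔ G.Adj a b := by
    simp [G.adj_comm b a]
  rw [sum_choose_n3_eq_card_sigma, ← Finset.card_filter_add_card_filter_not
      (p := fun q => ∃ x ∈ q.2, ∃ y ∈ q.2, G.Adj x y), add_comm,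
    card_filter_sigma_commonNeighborPairs G v (Q := fun p => ¬∃ x ∈ p, ∃ y ∈ p, G.Adj x y),
    card_filter_sigma_commonNeighborPairs G v (Q := fun p => ∃ x ∈ p, ∃ y ∈ p, G.Adj x y),
    F7, F9, ← cnt3_swap]
  congr 2 <;> ext a b c <;> simp only [pair_has_edge_iff, G.adj_comm c] <;> tauto

end FourProfiles
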